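/- arXiv:1707.01931 — 2 statements merged into one kernel-verified Lean document; each statement's English description precedes it below -/
import Mathlib

section
/- For every n ≥ 3, the number a_n of Dyck arches ending with a catastrophe of length n satisfies a_n = binomial(n−2, ⌊(n−3)/2⌋). -/
/-- Validity of a path with catastrophes over the jump set `J`, starting from
altitude `h`: each step is either a jump `s ∈ J` keeping the altitude
nonnegative, or a catastrophe `s = -h` from an altitude `h > 0` with `-h ∉ J`
(landing at altitude `0`). -/
def CatValidFrom (J : Finset ℤ) : ℤ → List ℤ → Prop
  | _, [] => True
  | h, s :: r =>
    ((s ∈ J ∧ 0 ≤ h + s) ∨ (s = -h ∧ 0 < h ∧ -h ∉ J)) ∧ CatValidFrom J (h + s) r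

/-- The jump set of Dyck paths. For this jump set a catastrophe is a jump
`-h` from an altitude `h ≥ 2` to altitude `0`. -/
def dyckJ : Finset ℤ := {-1, 1}

/-- `l` is a Dyck path with catastrophes of length `n`. -/
def DyckCat (n : ℕ) (l : List ℤ) : Prop :=
  l.length = n ∧ CatValidFrom dyckJ 0 l ∧ l.sum = 0

/-- The arch condition for a path of length `n`: the altitude after step `i`
is strictly positive for all `1 ≤ i < n`. -/
def IsArch (n : ℕ) (l : List ℤ) : Prop :=
  ∀ i : ℕ, 1 ≤ i → i < n → 0 < (l.take i).sum

/-- The last step of `l` (a path starting at altitude `0`) is a catastrophe: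
`l` ends with the jump `-h` where `h > 0` is the altitude reached before the
last step and `-h` is not an allowed jump of `J`. -/
def EndsWithCat (J : Finset ℤ) (l : List ℤ) : Prop :=
  ∃ l' : List ℤ, l = l' ++ [-l'.sum] ∧ 0 < l'.sum ∧ -l'.sum ∉ J

/-- The number `a n` of Dyck arches ending with a catastrophe of length `n`:
Dyck paths with catastrophes of length `n` whose altitude after step `i` is
strictly positive for all `1 ≤ i < n` and whose final step is a catastrophe. -/
noncomputable def aCount (n : ℕ) : ℕ :=
  Nat.card {l : List ℤ // DyckCat n l ∧ IsArch n l ∧ EndsWithCat dyckJ l}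

lemma catValidFrom_append (J : Finset ℤ) (a b : List ℤ) (h : ℤ) :
    CatValidFrom J h (a ++ b) ↔ CatValidFrom J h a ∧ CatValidFrom J (h + a.sum) b := by
  induction a generalizing h with
  | nil => simp [CatValidFrom]
  | cons s r ih =>
    show (_ ∧ CatValidFrom J (h+s) (r ++ b)) ↔ _
    rw [ih, List.sum_cons, ← add_assoc]
    exact and_assoc.symm

lemma steps_mem (l : List ℤ) (h : ℤ) (hv : CatValidFrom dyckJ h l)
    (hp : ∀ i, i < l.length → 0 < h + (l.take (i+1)).sum) :
    ∀ x ∈ l, x = -1 ∨ x = 1 := by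
  induction l generalizing h with
  | nil => simp
  | cons s r ih =>
    obtain ⟨hstep, hrest⟩ := hv
    have h0 : 0 < h + s := by
      have := hp 0 (by simp)
      simpa using this
    have hs : s = -1 ∨ s = 1 := by
      rcases hstep with ⟨hs, _⟩ | ⟨hs, hh, _⟩
      · simpa [dyckJ] using hs
      · omega
    intro x hx
    rcases List.mem_cons.1 hx with hx | hx
    · exact hx ▸ hs
    · refine ih (h + s) hrest (fun i hi => ?_) x hx
      have := hp (i+1) (by simpa using Nat.succ_lt_succ hi)
      simpa [List.take_succ_cons, add_assoc] using this

lemma catValidFrom_of_mem (J : Finset ℤ) (l : List ℤ) (h : ℤ)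
    (hm : ∀ x ∈ l, x ∈ J) (hp : ∀ i, 0 ≤ h + (l.take i).sum) : CatValidFrom J h l := by
  induction l generalizing h with
  | nil => trivial
  | cons s r ih =>
    refine ⟨Or.inl ⟨hm s (by simp), by simpa using hp 1⟩, ?_⟩
    refine ih (h + s) (fun x hx => hm x (by simp [hx])) (fun i => ?_)
    have := hp (i+1)
    simpa [List.take_succ_cons, add_assoc] using this

def PS (N m : ℕ) : Set (List ℤ) :=
  {l | l.length = N ∧ (∀ x ∈ l, x = -1 ∨ x = 1) ∧ (∀ i, 0 ≤ (l.take i).sum) ∧ (m : ℤ) ≤ l.sum}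

def gMap (t : List ℤ) : List ℤ := 1 :: (t ++ [-(1 + t.sum)])

lemma gMap_maps (n : ℕ) (hn : 3 ≤ n) :
    ∀ t ∈ PS (n-2) 1, DyckCat n (gMap t) ∧ IsArch n (gMap t) ∧ EndsWithCat dyckJ (gMap t) := by
  rintro t ⟨hlen, hmem, hpre, hsum⟩
  have hsum1 : (1:ℤ) ≤ t.sum := by exact_mod_cast hsum
  refine ⟨⟨?_, ?_, ?_⟩, ?_, ?_⟩
  · simp [gMap, hlen]; omega
  · show CatValidFrom dyckJ 0 (1 :: (t ++ [-(1 + t.sum)]))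
    refine ⟨Or.inl ⟨by simp [dyckJ], by norm_num⟩, ?_⟩
    rw [show (0:ℤ) + 1 = 1 by ring, catValidFrom_append]
    refine ⟨catValidFrom_of_mem dyckJ t 1
      (fun x hx => by rcases hmem x hx with h | h <;> simp [dyckJ, h])
      (fun i => by have := hpre i; omega), ?_⟩
    refine ⟨Or.inr ⟨by ring, by omega, ?_⟩, trivial⟩
    simp [dyckJ]
    omega
  · simp [gMap]
  · intro i h1 hi
    obtain ⟨j, rfl⟩ : ∃ j, i = j + 1 := ⟨i - 1, by omega⟩
    show 0 < ((1 :: (t ++ [-(1 + t.sum)])).take (j+1)).sum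
    rw [List.take_succ_cons, List.sum_cons,
      List.take_append_of_le_length (by omega : j ≤ t.length)]
    have := hpre j
    omega
  · refine ⟨1 :: t, ?_, ?_, ?_⟩
    · simp [gMap]
    · simp; omega
    · simp [dyckJ]; omega

lemma gMap_surj (n : ℕ) (hn : 3 ≤ n) (l : List ℤ)
    (hl : DyckCat n l ∧ IsArch n l ∧ EndsWithCat dyckJ l) :
    ∃ t ∈ PS (n-2) 1, gMap t = l := by
  obtain ⟨⟨hlen, hvalid, hsum0⟩, harch, l', hsplit, hpos, hnotJ⟩ := hl
  have hnotJ' : l'.sum ≠ 1 ∧ l'.sum ≠ -1 := by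
    simp [dyckJ] at hnotJ; omega
  have hsum2 : 2 ≤ l'.sum := by omega
  have hlen' : l'.length = n - 1 := by
    rw [hsplit] at hlen; simp at hlen; omega
  have hp' : ∀ i, 1 ≤ i → i ≤ l'.length → 0 < (l'.take i).sum := by
    intro i h1 h2
    have := harch i h1 (by omega)
    rwa [hsplit, List.take_append_of_le_length h2] at this
  have hval' : CatValidFrom dyckJ 0 l' := by
    rw [hsplit, catValidFrom_append] at hvalid
    exact hvalid.1
  have hent : ∀ x ∈ l', x = -1 ∨ x = 1 := by
    refine steps_mem l' 0 hval' (fun i hi => ?_)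
    have := hp' (i+1) (by omega) (by omega)
    omega
  have hne : l' ≠ [] := by intro h; rw [h] at hlen'; simp at hlen'; omega
  obtain ⟨a, t, rfl⟩ := List.exists_cons_of_ne_nil hne
  have ha1 : a = 1 := by
    have h1 := hp' 1 le_rfl (by simp)
    simp at h1
    rcases hent a (by simp) with h | h <;> omega
  subst ha1
  simp only [List.sum_cons] at hsum2
  refine ⟨t, ⟨by simp at hlen'; omega, fun x hx => hent x (by simp [hx]), fun i => ?_, ?_⟩, ?_⟩
  · rcases le_or_gt i t.length with h | h
    · have := hp' (i+1) (by omega) (by simpa using Nat.succ_le_succ h)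
      rw [List.take_succ_cons, List.sum_cons] at this
      omega
    · rw [List.take_of_length_le h.le]
      omega
  · push_cast
    omega
  · rw [hsplit]
    simp [gMap]

lemma PS_zero : PS 0 0 = {([] : List ℤ)} := by
  ext l
  simp only [PS, Set.mem_setOf_eq, Set.mem_singleton_iff, List.length_eq_zero_iff]
  constructor
  · rintro ⟨h, -⟩; exact h
  · rintro rfl; simp

lemma PS_empty (N m : ℕ) (h : N < m) : PS N m = ∅ := by
  ext l
  simp only [PS, Set.mem_setOf_eq, Set.mem_empty_iff_false, iff_false]
  rintro ⟨hlen, hmem, -, hsum⟩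
  have : l.sum ≤ l.length • (1:ℤ) := List.sum_le_card_nsmul l 1 (fun x hx => by
    rcases hmem x hx with h | h <;> omega)
  simp only [nsmul_eq_mul, mul_one, hlen] at this
  omega

lemma PS_union (N m : ℕ) :
    PS (N+1) m = ((· ++ [(1:ℤ)]) '' PS N (m-1)) ∪ ((· ++ [(-1:ℤ)]) '' PS N (m+1)) := by
  ext l
  constructor
  · rintro ⟨hlen, hmem, hpre, hsum⟩
    have hne : l ≠ [] := by intro h; simp [h] at hlen
    have hget : l.getLast hne ∈ l := List.getLast_mem hne
    have hsplit : l.dropLast ++ [l.getLast hne] = l := List.dropLast_append_getLast hne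
    have hdl : l.dropLast = l.take N := by
      rw [List.dropLast_eq_take]; congr 1; omega
    have hdlen : l.dropLast.length = N := by
      simp [hlen]
    have hdmem : ∀ x ∈ l.dropLast, x = -1 ∨ x = 1 := fun x hx =>
      hmem x (List.mem_of_mem_dropLast hx)
    have hdpre : ∀ i, 0 ≤ (l.dropLast.take i).sum := by
      intro i
      rw [hdl, List.take_take]
      exact hpre _
    have hdsum : l.dropLast.sum = l.sum - l.getLast hne := by
      have := congrArg List.sum hsplit
      simp at this
      omega
    have hd0 : 0 ≤ l.dropLast.sum := by
      have h := hdpre N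
      rwa [List.take_of_length_le hdlen.le] at h
    rcases hmem _ hget with h1 | h1
    · right
      refine ⟨l.dropLast, ⟨hdlen, hdmem, hdpre, ?_⟩, by rw [← h1]; exact hsplit⟩
      push_cast; omega
    · left
      refine ⟨l.dropLast, ⟨hdlen, hdmem, hdpre, ?_⟩, by rw [← h1]; exact hsplit⟩
      push_cast; omega
  · rintro (⟨t, ⟨hlen, hmem, hpre, hsum⟩, rfl⟩ | ⟨t, ⟨hlen, hmem, hpre, hsum⟩, rfl⟩) <;>
      refine ⟨by simp [hlen], fun x hx => ?_, fun i => ?_, ?_⟩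
    · rcases List.mem_append.1 hx with h | h
      · exact hmem x h
      · right; simpa using h
    · rcases le_or_gt i t.length with h | h
      · rw [List.take_append_of_le_length h]; exact hpre i
      · rw [List.take_of_length_le (by simp; omega)]
        have h0 : 0 ≤ t.sum := by
          have := hpre t.length; rwa [List.take_of_length_le le_rfl] at this
        simp; push_cast at hsum ⊢; omega
    · simp; push_cast at hsum ⊢; omega
    · rcases List.mem_append.1 hx with h | h
      · exact hmem x h
      · left; simpa using h
    · rcases le_or_gt i t.length with h | h
      · rw [List.take_append_of_le_length h]; exact hpre i
      · rw [List.take_of_length_le (by simp; omega)]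
        simp; push_cast at hsum ⊢; omega
    · simp; push_cast at hsum ⊢; omega

lemma PS_finite (N : ℕ) : ∀ m, (PS N m).Finite := by
  induction N with
  | zero =>
    intro m
    refine Set.Finite.subset (Set.finite_singleton ([] : List ℤ)) ?_
    rintro l ⟨h, -⟩
    simpa using List.length_eq_zero_iff.1 h
  | succ N ih =>
    intro m
    rw [PS_union]
    exact ((ih _).image _).union ((ih _).image _)

lemma PS_card (N : ℕ) : ∀ m ≤ N, (PS N m).ncard = N.choose ((N - m) / 2) := by
  induction N with
  | zero =>
    intro m hm
    interval_cases m
    rw [PS_zero]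
    simp
  | succ N ih =>
    intro m hm
    have hdisj : Disjoint ((· ++ [(1:ℤ)]) '' PS N (m-1)) ((· ++ [(-1:ℤ)]) '' PS N (m+1)) := by
      rw [Set.disjoint_left]
      rintro l ⟨a, -, rfl⟩ ⟨b, -, hb⟩
      have := (List.append_inj' hb (by simp)).2
      simp at this
    have hinj1 : Function.Injective (· ++ [(1:ℤ)]) := List.append_left_injective _
    have hinj2 : Function.Injective (· ++ [(-1:ℤ)]) := List.append_left_injective _
    rw [PS_union, Set.ncard_union_eq hdisj ((PS_finite _ _).image _) ((PS_finite _ _).image _),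
      Set.ncard_image_of_injective _ hinj1, Set.ncard_image_of_injective _ hinj2]
    rcases eq_or_lt_of_le hm with h | h
    · -- m = N + 1
      rw [PS_empty N (m+1) (by omega), Set.ncard_empty, ih (m-1) (by omega),
        show (N - (m-1))/2 = 0 by omega, show (N+1-m)/2 = 0 by omega]
      simp
    · have hmN : m ≤ N := by omega
      rcases eq_or_lt_of_le hmN with hq | hq
      · -- m = N
        rw [PS_empty N (m+1) (by omega), Set.ncard_empty, ih (m-1) (by omega),
          show (N - (m-1))/2 = 0 by omega, show (N+1-m)/2 = 0 by omega]
        simp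
      · -- m + 1 ≤ N
        rw [ih (m-1) (by omega), ih (m+1) (by omega)]
        rcases Nat.eq_zero_or_pos m with hm0 | hm1
        · subst hm0
          rcases Nat.even_or_odd N with ⟨t, ht⟩ | ⟨t, ht⟩
          · -- N even, N = 2t with t ≥ 1
            obtain ⟨u, rfl⟩ : ∃ u, t = u + 1 := ⟨t - 1, by omega⟩
            rw [show (N - (0-1))/2 = u + 1 by omega, show (N - (0+1))/2 = u by omega,
              show (N + 1 - 0)/2 = u + 1 by omega, show N + 1 = N + 1 from rfl]
            have := Nat.choose_succ_succ N u
            simp only [Nat.succ_eq_add_one] at this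
            omega
          · -- N odd, N = 2t+1
            rw [show (N - (0-1))/2 = t by omega, show (N - (0+1))/2 = t by omega,
              show (N + 1 - 0)/2 = t + 1 by omega]
            have h1 := Nat.choose_succ_succ N t
            simp only [Nat.succ_eq_add_one] at h1
            have h2 : N.choose (t + 1) = N.choose t := by
              rw [show N = 2 * t + 1 by omega]
              exact Nat.choose_symm_half t
            omega
        · rcases Nat.even_or_odd (N - m) with ⟨t, ht⟩ | ⟨t, ht⟩
          · -- N - m even = 2t, t ≥ 1
            obtain ⟨u, rfl⟩ : ∃ u, t = u + 1 := ⟨t - 1, by omega⟩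
            rw [show (N - (m-1))/2 = u + 1 by omega, show (N - (m+1))/2 = u by omega,
              show (N + 1 - m)/2 = u + 1 by omega]
            have := Nat.choose_succ_succ N u
            simp only [Nat.succ_eq_add_one] at this
            omega
          · -- N - m odd = 2t+1
            rw [show (N - (m-1))/2 = t + 1 by omega, show (N - (m+1))/2 = t by omega,
              show (N + 1 - m)/2 = t + 1 by omega]
            have := Nat.choose_succ_succ N t
            simp only [Nat.succ_eq_add_one] at this
            omega


/-- **Dyck arches ending with a catastrophe.** For `n ≥ 3`,
`a n = binomial (n-2) ⌊(n-3)/2⌋`. -/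
theorem aCount_eq_choose (n : ℕ) (hn : 3 ≤ n) :
    aCount n = (n - 2).choose ((n - 3) / 2) := by
  have hbij : Set.BijOn gMap (PS (n-2) 1)
      {l | DyckCat n l ∧ IsArch n l ∧ EndsWithCat dyckJ l} := by
    refine ⟨fun t ht => gMap_maps n hn t ht, fun a _ b _ hab => ?_, fun l hl => ?_⟩
    · simp only [gMap, List.cons.injEq] at hab
      exact (List.append_inj' hab.2 (by simp)).1
    · obtain ⟨t, ht, hgt⟩ := gMap_surj n hn l hl
      exact ⟨t, ht, hgt⟩
  have h1 : aCount n =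
      ({l | DyckCat n l ∧ IsArch n l ∧ EndsWithCat dyckJ l} : Set (List ℤ)).ncard :=
    Nat.card_coe_set_eq _
  rw [h1, ← hbij.image_eq, Set.ncard_image_of_injOn hbij.injOn,
    PS_card (n-2) 1 (by omega), show n - 2 - 1 = n - 3 by omega]
end

section
/- In the ring ℚ[[X]] of formal power series, let U be the unique power series with constant term 0 satisfying U = X·(1 + U²), and let M = Σ_{n≥0} m_n Xⁿ where m_n is the number of Dyck meanders with catastrophes of length n. Then M·(X² + (X² + X − 1)·U) = X·(U − 1). -/
open PowerSeries

/-- `l` is a Dyck meander with catastrophes of length `n` (endpoint at any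
altitude). -/
def DyckCatMeander (n : ℕ) (l : List ℤ) : Prop :=
  l.length = n ∧ CatValidFrom dyckJ 0 l

/-- The number `m n` of Dyck meanders with catastrophes of length `n`. -/
noncomputable def mCount (n : ℕ) : ℕ := Nat.card {l : List ℤ // DyckCatMeander n l}

/-- The generating function `M = ∑ m_n Xⁿ` of Dyck meanders with catastrophes. -/
noncomputable def M : PowerSeries ℚ := PowerSeries.mk fun n => (mCount n : ℚ)

/-!
Let `C h` be the generating function of meanders with catastrophes started at altitude `h`,
so that `M = C 0`. Splitting off the first step gives `C 0 = 1 + X C 1`,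
`C 1 = 1 + X (C 0 + C 2)` and `C h = 1 + X (C (h-1) + C (h+1) + C 0)` for `h ≥ 2`.
Since `U = X (1 + U²)`, the powers `U ^ h` solve the homogeneous recursion
`u h = X (u (h-1) + u (h+1))`, which suggests the ansatz `C h · D = (1 + X)(1 - U ^ h)` for
`h ≥ 1`, with `D = 1 - 2X - X² + X²U`. The defects `C h · D - (1 + X)(1 - U ^ h)` are `X` times
combinations of one another, so they are divisible by every power of `X` and vanish.
The case `h = 1` and `C 0 = 1 + X C 1` give `M · D = 1 - X - XU`, and the claim follows
after cancelling `D`, whose constant coefficient is `1`.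
-/

open Finset

def catSteps (J : Finset ℤ) (h : ℤ) : Finset ℤ :=
  {s ∈ insert (-h) J | (s ∈ J ∧ 0 ≤ h + s) ∨ (s = -h ∧ 0 < h ∧ -h ∉ J)}

lemma mem_catSteps {J : Finset ℤ} {h s : ℤ} :
    s ∈ catSteps J h ↔ (s ∈ J ∧ 0 ≤ h + s) ∨ (s = -h ∧ 0 < h ∧ -h ∉ J) := by
  simp only [catSteps, mem_filter, mem_insert]
  tauto

def catPaths (J : Finset ℤ) : ℕ → ℤ → Finset (List ℤ)
  | 0, _ => {[]}
  | n + 1, h => (catSteps J h).biUnion fun s =>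
      (catPaths J n (h + s)).map ⟨List.cons s, List.cons_injective⟩

lemma mem_catPaths {J : Finset ℤ} :
    ∀ {n : ℕ} {h : ℤ} {l : List ℤ}, l ∈ catPaths J n h ↔ l.length = n ∧ CatValidFrom J h l
  | 0, h, l => by cases l <;> simp [catPaths, CatValidFrom]
  | n + 1, h, [] => by simp [catPaths]
  | n + 1, h, s :: r => by
    simp only [catPaths, CatValidFrom, mem_biUnion, mem_catSteps, mem_map, mem_catPaths,
      Function.Embedding.coeFn_mk, List.cons.injEq, exists_eq_right_right, List.length_cons,
      Nat.add_right_cancel_iff]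
    tauto

lemma card_catPaths_succ (J : Finset ℤ) (n : ℕ) (h : ℤ) :
    #(catPaths J (n + 1) h) = ∑ s ∈ catSteps J h, #(catPaths J n (h + s)) := by
  rw [catPaths, card_biUnion]
  · simp
  · intro s _ t _ hst
    simp only [Function.onFun, disjoint_left, mem_map, Function.Embedding.coeFn_mk]
    rintro _ ⟨l, -, rfl⟩ ⟨l', -, h'⟩
    exact hst (List.cons_eq_cons.mp h').1.symm

noncomputable def catGF (J : Finset ℤ) (h : ℤ) : ℚ⟦X⟧ :=
  mk fun n => (#(catPaths J n h) : ℚ)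

lemma catGF_eq (J : Finset ℤ) (h : ℤ) :
    catGF J h = 1 + X * ∑ s ∈ catSteps J h, catGF J (h + s) := by
  ext (_ | n)
  · simp [catGF, catPaths]
  · simp [catGF, coeff_succ_X_mul, card_catPaths_succ, map_sum]

lemma catSteps_dyckJ_zero : catSteps dyckJ 0 = {1} := by
  ext s; simp only [mem_catSteps, dyckJ, mem_insert, mem_singleton]; omega

lemma catSteps_dyckJ_one : catSteps dyckJ 1 = {-1, 1} := by
  ext s; simp only [mem_catSteps, dyckJ, mem_insert, mem_singleton]; omega

lemma catSteps_dyckJ_of_two_le {h : ℤ} (hh : 2 ≤ h) : catSteps dyckJ h = {-1, 1, -h} := by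
  ext s; simp only [mem_catSteps, dyckJ, mem_insert, mem_singleton]; omega

lemma catGF_dyckJ_zero : catGF dyckJ 0 = 1 + X * catGF dyckJ 1 := by
  simpa [catSteps_dyckJ_zero] using catGF_eq dyckJ 0

lemma catGF_dyckJ_one : catGF dyckJ 1 = 1 + X * (catGF dyckJ 0 + catGF dyckJ 2) := by
  simpa [catSteps_dyckJ_one] using catGF_eq dyckJ 1

lemma catGF_dyckJ_of_two_le {h : ℤ} (hh : 2 ≤ h) :
    catGF dyckJ h = 1 + X * (catGF dyckJ (h - 1) + catGF dyckJ (h + 1) + catGF dyckJ 0) := by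
  rw [catGF_eq, catSteps_dyckJ_of_two_le hh, sum_insert (by simp; omega),
    sum_insert (by simp; omega), sum_singleton]
  simp [sub_eq_add_neg, add_assoc]

lemma eq_zero_of_forall_eq_X_mul_mem_span {R ι : Type*} [CommSemiring R] {f : ι → R⟦X⟧}
    (hf : ∀ i, ∃ g ∈ Ideal.span (Set.range f), f i = X * g) (i : ι) : f i = 0 := by
  have hdvd : ∀ n j, X ^ n ∣ f j := by
    intro n
    induction n with
    | zero => simp
    | succ n ih =>
      intro j
      obtain ⟨g, hg, hfj⟩ := hf j
      have : g ∈ Ideal.span {X ^ n} :=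
        Ideal.span_le.mpr (by rintro _ ⟨k, rfl⟩; exact Ideal.mem_span_singleton.mpr (ih k)) hg
      rw [hfj, pow_succ']
      exact mul_dvd_mul_left X (Ideal.mem_span_singleton.mp this)
  ext n
  simpa using X_pow_dvd_iff.mp (hdvd (n + 1) i) n (Nat.lt_succ_self n)

lemma catGF_dyckJ_succ_mul {U : ℚ⟦X⟧} (hU : U = X * (1 + U ^ 2)) (k : ℕ) :
    catGF dyckJ (k + 1) * (1 - 2 * X - X ^ 2 + X ^ 2 * U) = (1 + X) * (1 - U ^ (k + 1)) := by
  set D : ℚ⟦X⟧ := 1 - 2 * X - X ^ 2 + X ^ 2 * U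
  set defect : ℕ → ℚ⟦X⟧ := fun k => catGF dyckJ (k + 1) * D - (1 + X) * (1 - U ^ (k + 1))
    with hdefect
  suffices ∀ k, defect k = 0 from sub_eq_zero.mp (this k)
  refine eq_zero_of_forall_eq_X_mul_mem_span fun k => ?_
  have mem (j : ℕ) : defect j ∈ Ideal.span (Set.range defect) := Ideal.subset_span ⟨j, rfl⟩
  cases k with
  | zero =>
    refine ⟨defect 1 + X * defect 0, add_mem (mem 1) (Ideal.mul_mem_left _ _ (mem 0)), ?_⟩
    simp only [hdefect, Nat.cast_zero, Nat.cast_one, zero_add, one_add_one_eq_two]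
    linear_combination D * catGF_dyckJ_one + X * D * catGF_dyckJ_zero + (1 + X) * hU
  | succ k =>
    refine ⟨defect (k + 2) + defect k + X * defect 0,
      add_mem (add_mem (mem _) (mem _)) (Ideal.mul_mem_left _ _ (mem 0)), ?_⟩
    have hk := catGF_dyckJ_of_two_le (h := k + 2) (by omega)
    simp only [hdefect]
    push_cast
    ring_nf at hk ⊢
    linear_combination D * hk + X * D * catGF_dyckJ_zero + (1 + X) * U ^ (k + 1) * hU

lemma M_eq_catGF : M = catGF dyckJ 0 := by
  ext n
  have hcard : mCount n = #(catPaths dyckJ n 0) := by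
    rw [mCount, ← Nat.card_eq_finsetCard]
    exact Nat.card_congr (Equiv.subtypeEquivRight fun l => mem_catPaths.symm)
  simp [M, catGF, hcard]

theorem M_mul_eq_general (U : PowerSeries ℚ)
    (hU : U = X * (1 + U ^ 2)) :
    M * (X ^ 2 + (X ^ 2 + X - 1) * U) = X * (U - 1) := by
  set D : ℚ⟦X⟧ := 1 - 2 * X - X ^ 2 + X ^ 2 * U
  have hMD : M * D = 1 - X - X * U := by
    have h1 := catGF_dyckJ_succ_mul hU 0
    rw [M_eq_catGF]
    push_cast at h1
    linear_combination D * catGF_dyckJ_zero + X * h1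
  have hD : D ≠ 0 := fun h => by simpa [D] using congrArg constantCoeff h
  refine mul_right_cancel₀ hD ?_
  linear_combination (X ^ 2 + (X ^ 2 + X - 1) * U) * hMD + (2 * X ^ 2 + X - 1) * hU

/-- **Algebraic equation for Dyck meanders with catastrophes.** If `U` is the
(unique) power series with constant term `0` satisfying `U = X·(1 + U²)`, then
`M·(X² + (X² + X - 1)·U) = X·(U - 1)`. -/
theorem M_mul_eq (U : PowerSeries ℚ) (hU0 : constantCoeff U = 0)
    (hU : U = X * (1 + U ^ 2)) :
    M * (X ^ 2 + (X ^ 2 + X - 1) * U) = X * (U - 1) :=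
  M_mul_eq_general U hU
end
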